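/- arXiv:1805.01691 — 5 statements merged into one kernel-verified Lean document; each statement's English description precedes it below -/
import Mathlib

section
/- Let T > 0, 0 < η < 1 and p ≥ 1. There exists a constant c > 0 (depending only on T, η and p) such that for all 0 ≤ s₁ < s₂ ≤ T, the function h_{s₁,s₂}(t) = ∫₀ᵗ 1_{[s₁,s₂]}(r) dr satisfies ‖h_{s₁,s₂}‖_{W_{η,p}} ≤ c (s₂ - s₁)^{1-η}, i.e. (∫₀ᵀ |h_{s₁,s₂}(t)|ᵖ dt + ∫₀ᵀ∫₀ᵀ |h_{s₁,s₂}(t) - h_{s₁,s₂}(s)|ᵖ / |t-s|^{1+pη} dt ds)^{1/p} ≤ c (s₂ - s₁)^{1-η}. -/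
/-!
The function `h = h_{s₁,s₂}` is 1-Lipschitz and increases by `δ = s₂ - s₁` in total, so
`|h t - h s| ≤ min |t - s| δ` and the Gagliardo integrand at `(t, s)` is dominated by the
truncated kernel `min u δ ^ p / u ^ (1 + p η)` at `u = |t - s|`. That kernel integrates over
`(0, δ)` and `(δ, T)` to `O(δ ^ (p - p η))`, while `|h| ≤ δ ≤ T ^ η δ ^ (1 - η)` controls the
`L^p` term; taking `p`-th roots turns `δ ^ (p - p η)` into `δ ^ (1 - η)`.
-/

open MeasureTheory

/-- `h s₁ s₂ (t) = ∫₀ᵗ 1_{[s₁,s₂]}(r) dr`. -/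
noncomputable def hFun (s₁ s₂ t : ℝ) : ℝ :=
  ∫ r in (0:ℝ)..t, Set.indicator (Set.Icc s₁ s₂) (fun _ => (1:ℝ)) r

open Set intervalIntegral
open scoped Interval

lemma rpow_le_rpow_mul_rpow_sub {δ T q : ℝ} (hδ : 0 < δ) (hδT : δ ≤ T) (hq : 0 ≤ q) (r : ℝ) :
    δ ^ r ≤ T ^ q * δ ^ (r - q) := by
  calc δ ^ r = δ ^ q * δ ^ (r - q) := by rw [← Real.rpow_add hδ, add_sub_cancel]
    _ ≤ T ^ q * δ ^ (r - q) := by gcongr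

lemma integral_le_mul_of_le {f : ℝ → ℝ} {T C : ℝ} (hT : 0 ≤ T)
    (hf0 : ∀ x ∈ Ioc 0 T, 0 ≤ f x) (hfC : ∀ x ∈ Ioc 0 T, f x ≤ C) :
    ∫ x in (0 : ℝ)..T, f x ≤ C * T := by
  have hbound : ∀ x ∈ Ι 0 T, ‖f x‖ ≤ C := fun x hx => by
    rw [uIoc_of_le hT] at hx
    rw [Real.norm_eq_abs, abs_of_nonneg (hf0 x hx)]; exact hfC x hx
  simpa [abs_of_nonneg hT] using (le_abs_self _).trans (norm_integral_le_of_norm_le_const hbound)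

lemma intervalIntegrable_comp_abs {φ : ℝ → ℝ} {T : ℝ} (hT : 0 ≤ T)
    (hφ : IntervalIntegrable φ volume 0 T) :
    IntervalIntegrable (fun u => φ |u|) volume (-T) T := by
  have hpos : IntervalIntegrable (fun u => φ |u|) volume 0 T :=
    hφ.congr fun u hu => by rw [uIoc_of_le hT] at hu; simp [abs_of_pos hu.1]
  refine IntervalIntegrable.trans ?_ hpos
  simpa using ((IntervalIntegrable.iff_comp_neg).1 hpos).symm

lemma integral_comp_abs_symm {φ : ℝ → ℝ} {T : ℝ} (hT : 0 ≤ T)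
    (hφ : IntervalIntegrable φ volume 0 T) :
    ∫ u in (-T)..T, φ |u| = 2 * ∫ u in (0 : ℝ)..T, φ u := by
  have hpos : ∫ u in (0 : ℝ)..T, φ |u| = ∫ u in (0 : ℝ)..T, φ u :=
    integral_congr_ae (.of_forall fun u hu => by rw [uIoc_of_le hT] at hu; simp [abs_of_pos hu.1])
  have hint := intervalIntegrable_comp_abs hT hφ
  have hneg : ∫ u in (-T)..0, φ |u| = ∫ u in (0 : ℝ)..T, φ |u| := by
    simpa using (integral_comp_neg (a := 0) (b := T) (fun u => φ |u|)).symm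
  rw [← integral_add_adjacent_intervals (b := 0) (hint.mono_set ?_) (hint.mono_set ?_), hneg,
    hpos, two_mul]
  all_goals
    refine uIcc_subset_uIcc ?_ ?_ <;> rw [uIcc_of_le (by linarith)] <;> constructor <;> linarith

lemma integral_comp_abs_sub_le {φ : ℝ → ℝ} {T t : ℝ} (hφ0 : ∀ u ∈ Icc 0 T, 0 ≤ φ u)
    (hφ : IntervalIntegrable φ volume 0 T) (ht : t ∈ Icc 0 T) :
    ∫ s in (0 : ℝ)..T, φ |t - s| ≤ 2 * ∫ u in (0 : ℝ)..T, φ u := by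
  obtain ⟨ht0, htT⟩ := ht
  have hT : 0 ≤ T := ht0.trans htT
  rw [integral_comp_sub_left (fun u => φ |u|), sub_zero, ← integral_comp_abs_symm hT hφ]
  refine integral_mono_interval (by linarith) (by linarith) htT
    ?_ (intervalIntegrable_comp_abs hT hφ)
  refine (ae_restrict_iff' measurableSet_Ioc).2 (.of_forall fun u hu => hφ0 _ ⟨abs_nonneg u, ?_⟩)
  exact abs_le.2 ⟨hu.1.le, hu.2⟩

lemma intervalIntegrable_comp_abs_sub {φ : ℝ → ℝ} {T t : ℝ}
    (hφ : IntervalIntegrable φ volume 0 T) (ht : t ∈ Icc 0 T) :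
    IntervalIntegrable (fun s => φ |t - s|) volume 0 T := by
  obtain ⟨ht0, htT⟩ := ht
  refine ((intervalIntegrable_comp_abs (ht0.trans htT) hφ).comp_sub_left t).mono_set ?_
  refine uIcc_subset_uIcc ?_ ?_ <;> rw [uIcc_of_ge (by linarith)] <;> constructor <;> linarith

noncomputable def truncKernel (p η δ u : ℝ) : ℝ := min u δ ^ p / u ^ (1 + p * η)

section truncKernel

variable {p η δ T : ℝ}

lemma truncKernel_nonneg {u : ℝ} (hu : 0 ≤ u) (hδ : 0 ≤ δ) : 0 ≤ truncKernel p η δ u := by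
  unfold truncKernel; positivity

lemma eqOn_truncKernel_uIoc_zero (hδ : 0 ≤ δ) :
    EqOn (truncKernel p η δ) (fun u => u ^ (p - p * η - 1)) (Ι 0 δ) := by
  intro u hu
  rw [uIoc_of_le hδ] at hu
  rw [truncKernel, min_eq_left hu.2, ← Real.rpow_sub hu.1]
  ring_nf

lemma eqOn_truncKernel_uIoc_of_le (hδ : 0 < δ) (hδT : δ ≤ T) :
    EqOn (truncKernel p η δ) (fun u => δ ^ p * u ^ (-(1 + p * η))) (Ι δ T) := by
  intro u hu
  rw [uIoc_of_le hδT] at hu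
  simp only [truncKernel, min_eq_right hu.1.le, Real.rpow_neg (hδ.trans hu.1).le, div_eq_mul_inv]

lemma intervalIntegrable_truncKernel_zero_delta (hp : 0 < p) (hη : η < 1) (hδ : 0 ≤ δ) :
    IntervalIntegrable (truncKernel p η δ) volume 0 δ :=
  (intervalIntegrable_rpow' (by nlinarith)).congr (eqOn_truncKernel_uIoc_zero hδ).symm

lemma intervalIntegrable_truncKernel_delta (hδ : 0 < δ) (hδT : δ ≤ T) :
    IntervalIntegrable (truncKernel p η δ) volume δ T :=
  ((intervalIntegrable_rpow (Or.inr (notMem_uIcc_of_lt hδ (hδ.trans_le hδT)))).const_mul _).congr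
    (eqOn_truncKernel_uIoc_of_le hδ hδT).symm

lemma integral_truncKernel_zero_delta (hp : 0 < p) (hη : η < 1) (hδ : 0 < δ) :
    ∫ u in (0 : ℝ)..δ, truncKernel p η δ u = δ ^ (p - p * η) / (p - p * η) := by
  have hexp : 0 < p - p * η := by nlinarith
  rw [integral_congr_ae (.of_forall (eqOn_truncKernel_uIoc_zero hδ.le)),
    integral_rpow (Or.inl (by linarith)), sub_add_cancel, Real.zero_rpow hexp.ne', sub_zero]

lemma integral_truncKernel_delta_le (hpη : 0 < p * η) (hδ : 0 < δ) (hδT : δ ≤ T) :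
    ∫ u in δ..T, truncKernel p η δ u ≤ δ ^ (p - p * η) / (p * η) := by
  rw [integral_congr_ae (.of_forall (eqOn_truncKernel_uIoc_of_le hδ hδT)),
    intervalIntegral.integral_const_mul,
    integral_rpow (Or.inr ⟨by linarith, notMem_uIcc_of_lt hδ (hδ.trans_le hδT)⟩),
    show -(1 + p * η) + 1 = -(p * η) by ring]
  calc δ ^ p * ((T ^ (-(p * η)) - δ ^ (-(p * η))) / -(p * η))
      = δ ^ p * ((δ ^ (-(p * η)) - T ^ (-(p * η))) / (p * η)) := by ring
    _ ≤ δ ^ p * (δ ^ (-(p * η)) / (p * η)) := by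
        gcongr
        exact sub_le_self _ (Real.rpow_nonneg (hδ.le.trans hδT) _)
    _ = δ ^ (p - p * η) / (p * η) := by
        rw [mul_div_assoc', ← Real.rpow_add hδ, sub_eq_add_neg]

lemma integral_truncKernel_le (hp : 0 < p) (hη0 : 0 < η) (hη1 : η < 1) (hδ : 0 < δ)
    (hδT : δ ≤ T) :
    ∫ u in (0 : ℝ)..T, truncKernel p η δ u
      ≤ (1 / (p - p * η) + 1 / (p * η)) * δ ^ (p - p * η) := by
  rw [← integral_add_adjacent_intervals (intervalIntegrable_truncKernel_zero_delta hp hη1 hδ.le)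
    (intervalIntegrable_truncKernel_delta hδ hδT), integral_truncKernel_zero_delta hp hη1 hδ]
  have := integral_truncKernel_delta_le (mul_pos hp hη0) hδ hδT
  linarith [show (1 / (p - p * η) + 1 / (p * η)) * δ ^ (p - p * η)
    = δ ^ (p - p * η) / (p - p * η) + δ ^ (p - p * η) / (p * η) by ring]

end truncKernel

section hFun

variable {p η s₁ s₂ T : ℝ}

lemma intervalIntegrable_indicator_Icc_one (s₁ s₂ a b : ℝ) :
    IntervalIntegrable (indicator (Icc s₁ s₂) fun _ => (1 : ℝ)) volume a b :=
  ((integrable_indicator_iff measurableSet_Icc).2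
    (integrableOn_const measure_Icc_lt_top.ne)).intervalIntegrable

lemma hFun_zero (s₁ s₂ : ℝ) : hFun s₁ s₂ 0 = 0 := integral_same

lemma abs_hFun_sub_eq_measureReal (s₁ s₂ t s : ℝ) :
    |hFun s₁ s₂ t - hFun s₁ s₂ s| = volume.real (Ι s t ∩ Icc s₁ s₂) := by
  rw [hFun, hFun, integral_interval_sub_left (intervalIntegrable_indicator_Icc_one ..)
    (intervalIntegrable_indicator_Icc_one ..), abs_integral_eq_abs_integral_uIoc,
    setIntegral_indicator measurableSet_Icc, setIntegral_const, smul_eq_mul, mul_one,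
    abs_of_nonneg measureReal_nonneg]

lemma abs_hFun_sub_le_min (h : s₁ ≤ s₂) (t s : ℝ) :
    |hFun s₁ s₂ t - hFun s₁ s₂ s| ≤ min |t - s| (s₂ - s₁) := by
  rw [abs_hFun_sub_eq_measureReal]
  refine le_min ?_ ?_
  · calc _ ≤ volume.real (Ι s t) := measureReal_mono inter_subset_left (by simp [Real.volume_uIoc])
      _ = |t - s| := by simp [measureReal_def, Real.volume_uIoc]
  · calc _ ≤ volume.real (Icc s₁ s₂) := measureReal_mono inter_subset_right measure_Icc_lt_top.ne
      _ = s₂ - s₁ := Real.volume_real_Icc_of_le h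

lemma abs_hFun_le (h : s₁ ≤ s₂) (t : ℝ) : |hFun s₁ s₂ t| ≤ s₂ - s₁ := by
  simpa [hFun_zero] using (abs_hFun_sub_le_min h t 0).trans (min_le_right _ _)

lemma rpow_abs_hFun_sub_div_le_truncKernel (hp : 0 ≤ p) (h : s₁ ≤ s₂) (t s : ℝ) :
    |hFun s₁ s₂ t - hFun s₁ s₂ s| ^ p / |t - s| ^ (1 + p * η)
      ≤ truncKernel p η (s₂ - s₁) |t - s| :=
  div_le_div_of_nonneg_right
    (Real.rpow_le_rpow (abs_nonneg _) (abs_hFun_sub_le_min h t s) hp) (by positivity)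

lemma integral_rpow_abs_hFun_le (hp : 0 ≤ p) (h : s₁ ≤ s₂) (hT : 0 ≤ T) :
    ∫ t in (0 : ℝ)..T, |hFun s₁ s₂ t| ^ p ≤ (s₂ - s₁) ^ p * T := by
  simpa using integral_le_mul_of_le hT (fun t _ => by positivity)
    fun t _ => Real.rpow_le_rpow (abs_nonneg _) (abs_hFun_le h t) hp

lemma integral_gagliardo_hFun_le (hp : 0 < p) (hη0 : 0 < η) (hη1 : η < 1) (hs₁ : 0 ≤ s₁)
    (h : s₁ < s₂) (hs₂ : s₂ ≤ T) :
    ∫ t in (0 : ℝ)..T, ∫ s in (0 : ℝ)..T,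
        |hFun s₁ s₂ t - hFun s₁ s₂ s| ^ p / |t - s| ^ (1 + p * η)
      ≤ 2 * ((1 / (p - p * η) + 1 / (p * η)) * (s₂ - s₁) ^ (p - p * η)) * T := by
  have hδ : 0 < s₂ - s₁ := sub_pos.2 h
  have hδT : s₂ - s₁ ≤ T := by linarith
  have hT : 0 ≤ T := hδ.le.trans hδT
  have hφ := (intervalIntegrable_truncKernel_zero_delta hp hη1 hδ.le).trans
    (intervalIntegrable_truncKernel_delta (p := p) (η := η) hδ hδT)
  have hφ0 : ∀ u ∈ Icc 0 T, 0 ≤ truncKernel p η (s₂ - s₁) u :=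
    fun u hu => truncKernel_nonneg hu.1 hδ.le
  have hinner : ∀ t ∈ Ioc 0 T, ∫ s in (0 : ℝ)..T,
      |hFun s₁ s₂ t - hFun s₁ s₂ s| ^ p / |t - s| ^ (1 + p * η)
        ≤ ∫ s in (0 : ℝ)..T, truncKernel p η (s₂ - s₁) |t - s| := fun t ht => by
    rw [integral_of_le hT, integral_of_le hT]
    exact integral_mono_of_nonneg (.of_forall fun s => by positivity)
      (intervalIntegrable_comp_abs_sub hφ (Ioc_subset_Icc_self ht)).1
      (.of_forall fun s => rpow_abs_hFun_sub_div_le_truncKernel hp.le h.le t s)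
  refine integral_le_mul_of_le hT (fun t _ => integral_nonneg hT fun s _ => by positivity)
    fun t ht => ?_
  calc _ ≤ _ := hinner t ht
    _ ≤ 2 * ∫ u in (0 : ℝ)..T, truncKernel p η (s₂ - s₁) u :=
      integral_comp_abs_sub_le hφ0 hφ (Ioc_subset_Icc_self ht)
    _ ≤ _ := by gcongr; exact integral_truncKernel_le hp hη0 hη1 hδ hδT

lemma hFun_sobolev_integrals_le (hp : 0 < p) (hη0 : 0 < η) (hη1 : η < 1) (hs₁ : 0 ≤ s₁)
    (h : s₁ < s₂) (hs₂ : s₂ ≤ T) :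
    (∫ t in (0 : ℝ)..T, |hFun s₁ s₂ t| ^ p) +
        ∫ t in (0 : ℝ)..T, ∫ s in (0 : ℝ)..T,
          |hFun s₁ s₂ t - hFun s₁ s₂ s| ^ p / |t - s| ^ (1 + p * η)
      ≤ (T ^ (p * η) + 2 * (1 / (p - p * η) + 1 / (p * η))) * T * (s₂ - s₁) ^ (p - p * η) := by
  have hδ : 0 < s₂ - s₁ := sub_pos.2 h
  have hδT : s₂ - s₁ ≤ T := by linarith
  have hT : 0 ≤ T := hδ.le.trans hδT
  have hδp := rpow_le_rpow_mul_rpow_sub (q := p * η) hδ hδT (by positivity) p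
  have hfirst := (integral_rpow_abs_hFun_le hp.le h.le hT).trans
    (mul_le_mul_of_nonneg_right hδp hT)
  have hsecond := integral_gagliardo_hFun_le hp hη0 hη1 hs₁ h hs₂
  linarith

end hFun

/-- The fractional Sobolev `W_{η,p}` norm bound for `h_{s₁,s₂}`. -/
theorem stmt0 (T η p : ℝ) (hT : 0 < T) (hη0 : 0 < η) (hη1 : η < 1) (hp : 1 ≤ p) :
    ∃ c > 0, ∀ s₁ s₂ : ℝ, 0 ≤ s₁ → s₁ < s₂ → s₂ ≤ T →
      ((∫ t in (0:ℝ)..T, |hFun s₁ s₂ t| ^ p) +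
        ∫ t in (0:ℝ)..T, ∫ s in (0:ℝ)..T,
          |hFun s₁ s₂ t - hFun s₁ s₂ s| ^ p / |t - s| ^ (1 + p * η)) ^ (1 / p)
      ≤ c * (s₂ - s₁) ^ (1 - η) := by
  have hp0 : 0 < p := zero_lt_one.trans_le hp
  have hpη : 0 < p - p * η := by nlinarith
  set C := (T ^ (p * η) + 2 * (1 / (p - p * η) + 1 / (p * η))) * T
  have hC : 0 < C := by positivity
  refine ⟨C ^ (1 / p), by positivity, fun s₁ s₂ hs₁ h hs₂ => ?_⟩
  have hδ : 0 < s₂ - s₁ := sub_pos.2 h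
  calc _ ≤ (C * (s₂ - s₁) ^ (p - p * η)) ^ (1 / p) := by
        refine Real.rpow_le_rpow (add_nonneg ?_ ?_)
          (hFun_sobolev_integrals_le hp0 hη0 hη1 hs₁ h hs₂) (by positivity)
        · exact integral_nonneg hT.le fun t _ => by positivity
        · exact integral_nonneg hT.le fun t _ => integral_nonneg hT.le fun s _ => by positivity
    _ = C ^ (1 / p) * (s₂ - s₁) ^ (1 - η) := by
        rw [Real.mul_rpow hC.le (by positivity), ← Real.rpow_mul hδ.le]
        congr 2
        field_simp
end

section
/- For every real z > e, the unique w > 0 satisfying w e^w = z (the Lambert W function at z) satisfies w ≥ log z - log log z. -/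
/-- For `z > e`, the Lambert W function value `w > 0` with `w e^w = z` satisfies
`w ≥ log z - log log z`. -/
theorem stmt4 (z : ℝ) (hz : Real.exp 1 < z) (w : ℝ) (hw : 0 < w)
    (hwe : w * Real.exp w = z) :
    Real.log z - Real.log (Real.log z) ≤ w := by
  have hw1 : 1 ≤ w := by
    by_contra h
    push_neg at h
    have : w * Real.exp w ≤ 1 * Real.exp 1 :=
      mul_le_mul h.le (Real.exp_le_exp.mpr h.le) (Real.exp_pos w).le one_pos.le
    rw [one_mul, hwe] at this
    linarith
  have hlw : 0 ≤ Real.log w := Real.log_nonneg hw1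
  have hlogz : Real.log z = Real.log w + w := by
    rw [← hwe, Real.log_mul (ne_of_gt hw) (Real.exp_pos w).ne', Real.log_exp]
  have h2 : Real.log w ≤ Real.log (Real.log z) := by
    rw [hlogz]
    exact Real.log_le_log hw (by linarith)
  linarith
end

section
/- Let ν > 0 and let n be an integer with n > e^ν. If X_1, …, X_n are (not necessarily independent) random variables each having the Poisson distribution with parameter ν, then E[ max_{1 ≤ i ≤ n} X_i ] ≤ log(n e^{-ν}) / W( log(n e^{-ν}) e^{-ν} ), where W is the Lambert W function. -/
/-!
For `t > 0` and any `M`, the tangent-line bound `1 + y ≤ e^y` at `y = t (x - M)` gives, pointwise,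
`max_i X_i + 1/t ≤ M + e^{-tM}/t · ∑_i e^{t X_i}`; hence `E[max_i X_i] ≤ M` as soon as
`∑_i E[e^{t X_i}] ≤ e^{tM}`. For a Poisson variable `E[e^{tX}] = exp (ν (e^t - 1))`, and with
`t = w + ν`, `M = e^t = log (n e^{-ν}) / w` the defining equation of `w` makes
`n exp (ν (e^t - 1)) = e^{tM}` exactly.

The fibres of each `X_i` have outer measures summing to `1`, which makes them null measurable,
so each `X_i` is a.e. measurable.
-/

open MeasureTheory Set Real
open scoped ENNReal

theorem Real.add_inv_le_add_exp_mul_div {t : ℝ} (ht : 0 < t) (x M : ℝ) :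
    x + t⁻¹ ≤ M + exp (t * x) / (t * exp (t * M)) := by
  have htangent := add_one_le_exp (t * x - t * M)
  rw [exp_sub] at htangent
  calc x + t⁻¹ = M + (t * x - t * M + 1) / t := by field_simp; ring
    _ ≤ M + exp (t * x) / exp (t * M) / t := by gcongr
    _ = M + exp (t * x) / (t * exp (t * M)) := by rw [div_div, mul_comm (exp _) t]

theorem tsum_ofReal_exp_mul_mul_poisson {ν : ℝ} (hν : 0 ≤ ν) (t : ℝ) :
    ∑' k : ℕ, ENNReal.ofReal (exp (t * k)) * ENNReal.ofReal (exp (-ν) * ν ^ k / k.factorial)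
      = ENNReal.ofReal (exp (ν * (exp t - 1))) := by
  have hterm (k : ℕ) : ENNReal.ofReal (exp (t * k)) *
      ENNReal.ofReal (exp (-ν) * ν ^ k / k.factorial)
        = ENNReal.ofReal (exp (-ν) * ((ν * exp t) ^ k / k.factorial)) := by
    rw [← ENNReal.ofReal_mul (exp_pos _).le, mul_comm t, exp_nat_mul]
    ring_nf
  have hsum := (NormedSpace.expSeries_div_hasSum_exp (ν * exp t)).mul_left (exp (-ν))
  rw [tsum_congr hterm, ← ENNReal.ofReal_tsum_of_nonneg (fun k => by positivity) hsum.summable,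
    hsum.tsum_eq, ← exp_eq_exp_ℝ, ← exp_add]
  ring_nf

namespace MeasureTheory

variable {Ω : Type*} [MeasurableSpace Ω] {μ : Measure Ω}

theorem NullMeasurableSet.of_measure_add_measure_compl_le [IsFiniteMeasure μ] {s : Set Ω}
    (h : μ s + μ sᶜ ≤ μ univ) : NullMeasurableSet s μ := by
  set t := toMeasurable μ s
  set u := toMeasurable μ sᶜ
  have hunion : t ∪ u = univ :=
    eq_univ_of_forall fun ω => (em (ω ∈ s)).imp (subset_toMeasurable μ s ·)
      (subset_toMeasurable μ sᶜ ·)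
  have hinter : μ (t ∩ u) = 0 := by
    have key := measure_union_add_inter (μ := μ) t (measurableSet_toMeasurable μ sᶜ)
    rw [hunion, measure_toMeasurable, measure_toMeasurable] at key
    have : μ univ + μ (t ∩ u) ≤ μ univ + 0 := by rw [add_zero]; exact key.trans_le h
    exact nonpos_iff_eq_zero.1 (ENNReal.le_of_add_le_add_left (measure_ne_top μ univ) this)
  have hdiff : μ (t \ s) = 0 :=
    measure_mono_null (inter_subset_inter_right t (subset_toMeasurable μ sᶜ)) hinter
  have : t \ (t \ s) = s := sdiff_sdiff_cancel_left (subset_toMeasurable μ s)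
  exact this ▸ (measurableSet_toMeasurable μ s).nullMeasurableSet.diff (.of_null hdiff)

theorem aemeasurable_of_tsum_measure_preimage_singleton_le {α : Type*} [Countable α]
    [MeasurableSpace α] [IsFiniteMeasure μ] {f : Ω → α}
    (h : ∑' a, μ (f ⁻¹' {a}) ≤ μ univ) : AEMeasurable f μ := by
  refine NullMeasurable.aemeasurable fun S _ => .of_measure_add_measure_compl_le ?_
  calc μ (f ⁻¹' S) + μ (f ⁻¹' S)ᶜ
      ≤ ∑' a : S, μ (f ⁻¹' {a.1}) + ∑' a : ↥Sᶜ, μ (f ⁻¹' {a.1}) := by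
        rw [← preimage_compl, ← biUnion_preimage_singleton f S,
          ← biUnion_preimage_singleton f Sᶜ]
        exact add_le_add (measure_biUnion_le μ S.to_countable _)
          (measure_biUnion_le μ Sᶜ.to_countable _)
    _ = ∑' a, μ (f ⁻¹' {a}) :=
      ENNReal.summable.tsum_add_tsum_compl (f := fun a => μ (f ⁻¹' {a})) ENNReal.summable
    _ ≤ μ univ := h

variable [IsProbabilityMeasure μ]

theorem aemeasurable_of_poisson {ν : ℝ} {X : Ω → ℕ} (hν : 0 ≤ ν)
    (hX : ∀ k : ℕ, μ {ω | X ω = k} = ENNReal.ofReal (exp (-ν) * ν ^ k / k.factorial)) :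
    AEMeasurable X μ :=
  aemeasurable_of_tsum_measure_preimage_singleton_le <| by
    have htotal := tsum_ofReal_exp_mul_mul_poisson hν 0
    simp only [zero_mul, exp_zero, ENNReal.ofReal_one, one_mul, sub_self, mul_zero] at htotal
    exact (tsum_congr hX).trans_le (htotal.trans measure_univ.symm).le

theorem lintegral_ofReal_exp_mul_of_poisson {ν : ℝ} {X : Ω → ℕ} (hν : 0 ≤ ν)
    (hX : ∀ k : ℕ, μ {ω | X ω = k} = ENNReal.ofReal (exp (-ν) * ν ^ k / k.factorial)) (t : ℝ) :
    ∫⁻ ω, ENNReal.ofReal (exp (t * X ω)) ∂μ = ENNReal.ofReal (exp (ν * (exp t - 1))) := by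
  have hXm := aemeasurable_of_poisson hν hX
  have hlaw (k : ℕ) : μ.map X {k} = ENNReal.ofReal (exp (-ν) * ν ^ k / k.factorial) := by
    rw [Measure.map_apply_of_aemeasurable hXm (measurableSet_singleton k)]
    exact hX k
  rw [← lintegral_map' (f := fun k : ℕ => ENNReal.ofReal (exp (t * k)))
    measurable_from_nat.aemeasurable hXm, lintegral_countable']
  simp_rw [hlaw]
  exact tsum_ofReal_exp_mul_mul_poisson hν t

theorem lintegral_sup_le_of_sum_lintegral_exp_mul_le {ι : Type*} [Fintype ι] [Nonempty ι]
    {Y : ι → Ω → ℕ} (hY : ∀ i, AEMeasurable (Y i) μ) {t M : ℝ} (ht : 0 < t)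
    (h : ∑ i, ∫⁻ ω, ENNReal.ofReal (exp (t * Y i ω)) ∂μ ≤ ENNReal.ofReal (exp (t * M))) :
    ∫⁻ ω, ((Finset.univ.sup fun i => Y i ω : ℕ) : ℝ≥0∞) ∂μ ≤ ENNReal.ofReal M := by
  set c := ENNReal.ofReal (t * exp (t * M))⁻¹
  have hpoint (ω : Ω) : ((Finset.univ.sup fun i => Y i ω : ℕ) : ℝ≥0∞) + ENNReal.ofReal t⁻¹
      ≤ ENNReal.ofReal M + c * ∑ i, ENNReal.ofReal (exp (t * Y i ω)) := by
    obtain ⟨j, -, hj⟩ := Finset.exists_mem_eq_sup Finset.univ Finset.univ_nonempty (Y · ω)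
    rw [hj]
    calc (Y j ω : ℝ≥0∞) + ENNReal.ofReal t⁻¹ = ENNReal.ofReal (Y j ω + t⁻¹) := by
          rw [ENNReal.ofReal_add (by positivity) (by positivity), ENNReal.ofReal_natCast]
      _ ≤ ENNReal.ofReal (M + exp (t * Y j ω) / (t * exp (t * M))) :=
          ENNReal.ofReal_le_ofReal (add_inv_le_add_exp_mul_div ht _ _)
      _ ≤ ENNReal.ofReal M + c * ENNReal.ofReal (exp (t * Y j ω)) := by
          refine ENNReal.ofReal_add_le.trans_eq ?_
          rw [div_eq_inv_mul, ENNReal.ofReal_mul (by positivity)]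
      _ ≤ ENNReal.ofReal M + c * ∑ i, ENNReal.ofReal (exp (t * Y i ω)) := by
          gcongr
          exact Finset.single_le_sum (f := fun i => ENNReal.ofReal (exp (t * Y i ω)))
            (fun _ _ => zero_le) (Finset.mem_univ j)
  have hmeas (i : ι) : AEMeasurable (fun ω => ENNReal.ofReal (exp (t * Y i ω))) μ :=
    (measurable_from_nat (f := fun k : ℕ => ENNReal.ofReal (exp (t * k)))).comp_aemeasurable
      (hY i)
  have hint : (∫⁻ ω, ((Finset.univ.sup fun i => Y i ω : ℕ) : ℝ≥0∞) ∂μ) + ENNReal.ofReal t⁻¹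
      ≤ ENNReal.ofReal M + ENNReal.ofReal t⁻¹ := by
    calc (∫⁻ ω, ((Finset.univ.sup fun i => Y i ω : ℕ) : ℝ≥0∞) ∂μ) + ENNReal.ofReal t⁻¹
        = ∫⁻ ω, (((Finset.univ.sup fun i => Y i ω : ℕ) : ℝ≥0∞) + ENNReal.ofReal t⁻¹) ∂μ := by
          rw [lintegral_add_right _ measurable_const, lintegral_const, measure_univ, mul_one]
      _ ≤ ∫⁻ ω, (ENNReal.ofReal M + c * ∑ i, ENNReal.ofReal (exp (t * Y i ω))) ∂μ :=
          lintegral_mono hpoint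
      _ = ENNReal.ofReal M + c * ∑ i, ∫⁻ ω, ENNReal.ofReal (exp (t * Y i ω)) ∂μ := by
          rw [lintegral_add_left measurable_const, lintegral_const, measure_univ, mul_one,
            lintegral_const_mul' _ _ ENNReal.ofReal_ne_top,
            lintegral_finsetSum' _ fun i _ => hmeas i]
      _ ≤ ENNReal.ofReal M + c * ENNReal.ofReal (exp (t * M)) := by gcongr
      _ = ENNReal.ofReal M + ENNReal.ofReal t⁻¹ := by
          rw [← ENNReal.ofReal_mul (by positivity)]
          field_simp
  exact (ENNReal.add_le_add_iff_right ENNReal.ofReal_ne_top).1 hint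

end MeasureTheory

theorem stmt5_general (ν : ℝ) (hν : 0 < ν) (n : ℕ)
    (Ω : Type) [MeasurableSpace Ω] (P : Measure Ω) [IsProbabilityMeasure P]
    (X : Fin n → Ω → ℕ)
    (hX : ∀ (i : Fin n) (k : ℕ),
      P {ω | X i ω = k} = ENNReal.ofReal (Real.exp (-ν) * ν ^ k / Nat.factorial k))
    -- `w = W(log(n e^{-ν}) e^{-ν})`, i.e. the unique positive solution of `w e^w = a`
    (w : ℝ) (hw : 0 < w)
    (hwe : w * Real.exp w = Real.log ((n : ℝ) * Real.exp (-ν)) * Real.exp (-ν)) :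
    ∫⁻ ω, ((Finset.univ.sup fun i => X i ω : ℕ) : ℝ≥0∞) ∂P
      ≤ ENNReal.ofReal (Real.log ((n : ℝ) * Real.exp (-ν)) / w) := by
  generalize hLdef : log (n * exp (-ν)) = L at hwe ⊢
  have hLM : L = w * exp (w + ν) := by
    rw [exp_add, ← mul_assoc, hwe, mul_assoc, ← exp_add, neg_add_cancel, exp_zero, mul_one]
  have hL : 1 < (n : ℝ) * exp (-ν) :=
    (log_pos_iff (by positivity)).1 (by rw [hLdef, hLM]; positivity)
  have : Nonempty (Fin n) := Fin.pos_iff_nonempty.1 <| Nat.pos_of_ne_zero <| by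
    rintro rfl
    norm_num at hL
  have hsum : ∑ i, ∫⁻ ω, ENNReal.ofReal (exp ((w + ν) * X i ω)) ∂P
      = ENNReal.ofReal (exp ((w + ν) * exp (w + ν))) := by
    simp_rw [lintegral_ofReal_exp_mul_of_poisson hν.le (hX _), Finset.sum_const,
      Finset.card_univ, Fintype.card_fin, nsmul_eq_mul, ← ENNReal.ofReal_natCast,
      ← ENNReal.ofReal_mul n.cast_nonneg]
    have hexpL : exp L = n * exp (-ν) := hLdef ▸ exp_log (by positivity)
    rw [show exp ((w + ν) * exp (w + ν)) = exp L * exp (ν * (exp (w + ν) - 1)) * exp ν by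
      rw [← exp_add, ← exp_add, hLM]; ring_nf, hexpL, exp_neg]
    field_simp
  calc ∫⁻ ω, ((Finset.univ.sup fun i => X i ω : ℕ) : ℝ≥0∞) ∂P ≤ ENNReal.ofReal (exp (w + ν)) :=
        lintegral_sup_le_of_sum_lintegral_exp_mul_le
          (fun i => aemeasurable_of_poisson hν.le (hX i)) (by positivity) hsum.le
    _ = ENNReal.ofReal (L / w) := by rw [hLM, mul_div_cancel_left₀ _ hw.ne']

theorem stmt5 (ν : ℝ) (hν : 0 < ν) (n : ℕ) (hn : Real.exp ν < (n : ℝ))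
    (Ω : Type) [MeasurableSpace Ω] (P : Measure Ω) [IsProbabilityMeasure P]
    (X : Fin n → Ω → ℕ)
    (hX : ∀ (i : Fin n) (k : ℕ),
      P {ω | X i ω = k} = ENNReal.ofReal (Real.exp (-ν) * ν ^ k / Nat.factorial k))
    -- `w = W(log(n e^{-ν}) e^{-ν})`, i.e. the unique positive solution of `w e^w = a`
    (w : ℝ) (hw : 0 < w)
    (hwe : w * Real.exp w = Real.log ((n : ℝ) * Real.exp (-ν)) * Real.exp (-ν)) :
    ∫⁻ ω, ((Finset.univ.sup fun i => X i ω : ℕ) : ℝ≥0∞) ∂P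
      ≤ ENNReal.ofReal (Real.log ((n : ℝ) * Real.exp (-ν)) / w) :=
  stmt5_general ν hν n Ω P X hX w hw hwe
end

section
/- Let λ, μ > 0, T > 0 and let n be a positive integer. For 0 ≤ i ≤ n-1, let u_i : [0,∞)² → ℝ be defined by u_i(x,z) = (1/√T)( 1_{C_{(i+1)T/n}}(x,z) - 1_{C_{iT/n}}(x,z) + μ ∫_{iT/n}^{(i+1)T/n} 1_{C_u}(x,z) du ). Then the family (u_i, 0 ≤ i ≤ n-1) is orthogonal in L²(ν_n): for all 0 ≤ i < j ≤ n-1, ∫∫ u_i(x,z) u_j(x,z) dν_n(x,z) = 0, where dν_n(x,z) = λ n dx ⊗ μ e^{-μ z} dz on [0,∞)². -/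
open MeasureTheory

/-- The trapeze `C_t = {(x,z) : 0 ≤ x ≤ t, z ≥ t - x}` (inside `[0,∞)²`). -/
def Ctrap (t : ℝ) : Set (ℝ × ℝ) := {p | 0 ≤ p.1 ∧ p.1 ≤ t ∧ t - p.1 ≤ p.2}

/-- Indicator of `C_t`. -/
noncomputable def indC (t : ℝ) (p : ℝ × ℝ) : ℝ :=
  Set.indicator (Ctrap t) (fun _ => (1 : ℝ)) p

/-- `u_i(x,z) = (1/√T)(1_{C_{(i+1)T/n}} - 1_{C_{iT/n}} + μ ∫_{iT/n}^{(i+1)T/n} 1_{C_u} du)(x,z)`. -/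
noncomputable def uSharp (T μ : ℝ) (n i : ℕ) (p : ℝ × ℝ) : ℝ :=
  (1 / Real.sqrt T) *
    (indC (((i : ℝ) + 1) * T / n) p - indC ((i : ℝ) * T / n) p +
      μ * ∫ u in ((i : ℝ) * T / n)..(((i : ℝ) + 1) * T / n), indC u p)

/-!
Fix `x ≥ 0` and integrate in `z` against the exponential density `μ e^{-μz}`. For `x ≤ t` the
`z`-section of `C_t` is `[t - x, ∞)`, of mass `e^{-μ(t-x)}`, so by Fubini the compensated increment
`1_{C_d} - 1_{C_c} + μ ∫_c^d 1_{C_u} du` has `z`-integral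
`e^{-μ(d-x)} - e^{-μ(c-x)} + μ ∫_c^d e^{-μ(u-x)} du = 0` as soon as `x ≤ c ≤ d`.
For `i < j`, `u_j(x, z)` vanishes for `z < jT/n - x`, while `u_i(x, z)` does not depend on
`z ≥ (i+1)T/n - x`; so `u_i u_j = K(x) u_j` and the `z`-integral vanishes if `x ≤ jT/n`.
If `x > jT/n ≥ (i+1)T/n`, then `u_i(x, ·) = 0`.
-/

open Set Real

noncomputable def compensatedIncrement (mu c d : ℝ) (p : ℝ × ℝ) : ℝ :=
  indC d p - indC c p + mu * ∫ u in c..d, indC u p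

lemma uSharp_eq (T mu : ℝ) (n i : ℕ) (p : ℝ × ℝ) :
    uSharp T mu n i p =
      1 / √T * compensatedIncrement mu ((i : ℝ) * T / n) (((i : ℝ) + 1) * T / n) p :=
  rfl

lemma indC_apply (t x z : ℝ) :
    indC t (x, z) = if 0 ≤ x ∧ x ≤ t ∧ t - x ≤ z then 1 else 0 := by
  simp [indC, Ctrap, indicator_apply]

lemma indC_of_lt_fst {t x : ℝ} (h : t < x) (z : ℝ) : indC t (x, z) = 0 :=
  if_neg fun hC => h.not_ge hC.2.1

lemma indC_of_lt_snd {t x z : ℝ} (h : z < t - x) : indC t (x, z) = 0 :=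
  if_neg fun hC => h.not_ge hC.2.2

lemma indC_snd_eq {t x z z' : ℝ} (hz : t - x ≤ z) (hz' : t - x ≤ z') :
    indC t (x, z) = indC t (x, z') := by
  simp only [indC_apply, hz, hz', and_true]

lemma indC_mul_eq_indicator {t x : ℝ} (hx : 0 ≤ x) (hxt : x ≤ t) (f : ℝ → ℝ) :
    (fun z => indC t (x, z) * f z) = (Ici (t - x)).indicator f := by
  ext z
  simp [indC_apply, indicator_apply, hx, hxt]

lemma norm_indC_le_one (t : ℝ) (p : ℝ × ℝ) : ‖indC t p‖ ≤ 1 :=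
  norm_indicator_le_norm_self _ _ |>.trans norm_one.le

lemma measurable_indC_uncurry : Measurable fun q : ℝ × ℝ × ℝ => indC q.1 q.2 := by
  refine Measurable.indicator measurable_const ?_
  change MeasurableSet {q : ℝ × ℝ × ℝ | 0 ≤ q.2.1 ∧ q.2.1 ≤ q.1 ∧ q.1 - q.2.1 ≤ q.2.2}
  measurability

section ExponentialWeight

variable {mu x : ℝ}

lemma integrableOn_exp_neg_mul_Ici (hmu : 0 < mu) (a : ℝ) :
    IntegrableOn (fun z => exp (-mu * z)) (Ici a) :=
  (integrableOn_Ici_iff_integrableOn_Ioi).2 (exp_neg_integrableOn_Ioi a hmu)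

lemma integrableOn_indC_mul_exp (hmu : 0 < mu) (hx : 0 ≤ x) {t : ℝ} (hxt : x ≤ t) :
    IntegrableOn (fun z => indC t (x, z) * exp (-mu * z)) (Ici 0) := by
  rw [indC_mul_eq_indicator hx hxt]
  exact (integrableOn_exp_neg_mul_Ici hmu 0).indicator measurableSet_Ici

lemma integral_indC_mul_exp (hmu : 0 < mu) (hx : 0 ≤ x) {t : ℝ} (hxt : x ≤ t) :
    ∫ z in Ici 0, indC t (x, z) * exp (-mu * z) = exp (-mu * (t - x)) / mu := by
  rw [indC_mul_eq_indicator hx hxt, setIntegral_indicator measurableSet_Ici, Ici_inter_Ici,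
    max_eq_right (sub_nonneg.2 hxt), integral_Ici_eq_integral_Ioi,
    integral_exp_mul_Ioi (neg_lt_zero.2 hmu), neg_div_neg_eq]

lemma integrable_indC_mul_exp_prod (hmu : 0 < mu) (c d : ℝ) :
    Integrable (fun q : ℝ × ℝ => indC q.2 (x, q.1) * exp (-mu * q.1))
      ((volume.restrict (Ici 0)).prod (volume.restrict (Ioc c d))) := by
  refine (Integrable.mul_prod (ν := volume.restrict (Ioc c d))
    (integrableOn_exp_neg_mul_Ici hmu 0) (integrable_const (1 : ℝ))).mono' ?_ ?_
  · have h : Measurable fun q : ℝ × ℝ => (q.2, (x, q.1)) := by fun_prop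
    exact ((measurable_indC_uncurry.comp h).mul (by fun_prop)).aestronglyMeasurable
  · refine ae_of_all _ fun q => ?_
    rw [norm_mul, norm_of_nonneg (exp_pos _).le, mul_comm, mul_one]
    exact mul_le_of_le_one_right (exp_pos _).le (norm_indC_le_one _ _)

lemma integrableOn_intervalIntegral_indC_mul_exp (hmu : 0 < mu) {c d : ℝ} (hcd : c ≤ d) :
    IntegrableOn (fun z => (∫ u in c..d, indC u (x, z)) * exp (-mu * z)) (Ici 0) := by
  simp_rw [intervalIntegral.integral_of_le hcd, ← integral_mul_const]
  exact (integrable_indC_mul_exp_prod hmu c d).integral_prod_left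

lemma integral_intervalIntegral_indC_mul_exp (hmu : 0 < mu) (hx : 0 ≤ x) {c d : ℝ}
    (hxc : x ≤ c) (hcd : c ≤ d) :
    ∫ z in Ici 0, (∫ u in c..d, indC u (x, z)) * exp (-mu * z)
      = ∫ u in c..d, exp (-mu * (u - x)) / mu := by
  simp_rw [intervalIntegral.integral_of_le hcd, ← integral_mul_const]
  rw [integral_integral_swap (integrable_indC_mul_exp_prod hmu c d)]
  exact setIntegral_congr_fun measurableSet_Ioc fun u hu =>
    integral_indC_mul_exp hmu hx (hxc.trans hu.1.le)

lemma integral_exp_neg_mul_sub (hmu : mu ≠ 0) (c d : ℝ) :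
    ∫ u in c..d, exp (-mu * (u - x)) = (exp (-mu * (c - x)) - exp (-mu * (d - x))) / mu := by
  have hderiv (u : ℝ) :
      HasDerivAt (fun u => -exp (-mu * (u - x)) / mu) (exp (-mu * (u - x))) u := by
    have h : HasDerivAt (fun u => -exp (-mu * (u - x)) / mu)
        (-(exp (-mu * (u - x)) * (-mu * 1)) / mu) u :=
      (((hasDerivAt_id u).sub_const x).const_mul (-mu)).exp.neg.div_const mu
    convert h using 1
    field_simp
  rw [intervalIntegral.integral_eq_sub_of_hasDerivAt (fun u _ => hderiv u)
    ((by fun_prop : Continuous fun u => exp (-mu * (u - x))).intervalIntegrable c d)]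
  ring

lemma integral_compensatedIncrement_mul_exp (hmu : 0 < mu) (hx : 0 ≤ x) {c d : ℝ}
    (hxc : x ≤ c) (hcd : c ≤ d) :
    ∫ z in Ici 0, compensatedIncrement mu c d (x, z) * exp (-mu * z) = 0 := by
  have hd := integrableOn_indC_mul_exp hmu hx (hxc.trans hcd)
  have hc := integrableOn_indC_mul_exp hmu hx hxc
  have hcomp := (integrableOn_intervalIntegral_indC_mul_exp (x := x) hmu hcd).const_mul mu
  simp_rw [compensatedIncrement, add_mul, sub_mul, mul_assoc mu]
  rw [integral_add ?_ hcomp, integral_sub hd hc, integral_const_mul,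
    integral_indC_mul_exp hmu hx (hxc.trans hcd), integral_indC_mul_exp hmu hx hxc,
    integral_intervalIntegral_indC_mul_exp hmu hx hxc hcd, intervalIntegral.integral_div,
    integral_exp_neg_mul_sub hmu.ne']
  · field_simp
    ring
  · exact hd.sub hc

end ExponentialWeight

section CompensatedIncrement

variable {mu c d x : ℝ}

lemma compensatedIncrement_of_lt_fst (hcd : c ≤ d) (h : d < x) (z : ℝ) :
    compensatedIncrement mu c d (x, z) = 0 := by
  have hint : ∫ u in c..d, indC u (x, z) = 0 := by
    refine (intervalIntegral.integral_congr (g := 0) fun u hu => ?_).trans (by simp)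
    rw [uIcc_of_le hcd] at hu
    exact indC_of_lt_fst (hu.2.trans_lt h) z
  simp [compensatedIncrement, indC_of_lt_fst h, indC_of_lt_fst (hcd.trans_lt h), hint]

lemma compensatedIncrement_of_lt_snd (hcd : c ≤ d) {z : ℝ} (h : z < c - x) :
    compensatedIncrement mu c d (x, z) = 0 := by
  have hint : ∫ u in c..d, indC u (x, z) = 0 := by
    refine (intervalIntegral.integral_congr (g := 0) fun u hu => ?_).trans (by simp)
    rw [uIcc_of_le hcd] at hu
    exact indC_of_lt_snd (h.trans_le (by linarith [hu.1]))
  simp [compensatedIncrement, indC_of_lt_snd h,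
    indC_of_lt_snd (h.trans_le (by linarith : c - x ≤ d - x)), hint]

lemma compensatedIncrement_snd_eq (hcd : c ≤ d) {z z' : ℝ} (hz : d - x ≤ z)
    (hz' : d - x ≤ z') :
    compensatedIncrement mu c d (x, z) = compensatedIncrement mu c d (x, z') := by
  have h {t : ℝ} (ht : t ≤ d) : indC t (x, z) = indC t (x, z') :=
    indC_snd_eq (by linarith) (by linarith)
  have hint : ∫ u in c..d, indC u (x, z) = ∫ u in c..d, indC u (x, z') :=
    intervalIntegral.integral_congr fun u hu => h (uIcc_of_le hcd ▸ hu).2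
  rw [compensatedIncrement, compensatedIncrement, h le_rfl, h hcd, hint]

theorem integral_compensatedIncrement_mul_compensatedIncrement_mul_exp (hmu : 0 < mu)
    (hx : 0 ≤ x) {c' d' : ℝ} (hcd : c ≤ d) (hdc' : d ≤ c') (hcd' : c' ≤ d') :
    ∫ z in Ici 0, compensatedIncrement mu c d (x, z) * compensatedIncrement mu c' d' (x, z)
      * exp (-mu * z) = 0 := by
  rcases le_or_gt x c' with hxc' | hc'x
  · set K := compensatedIncrement mu c d (x, d - x)
    have hfactor (z : ℝ) : compensatedIncrement mu c d (x, z)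
        * compensatedIncrement mu c' d' (x, z) * exp (-mu * z)
          = K * (compensatedIncrement mu c' d' (x, z) * exp (-mu * z)) := by
      rcases le_or_gt (d - x) z with hz | hz
      · rw [compensatedIncrement_snd_eq hcd hz le_rfl]
        ring
      · rw [compensatedIncrement_of_lt_snd hcd' (by linarith)]
        ring
    simp_rw [hfactor]
    rw [integral_const_mul, integral_compensatedIncrement_mul_exp hmu hx hxc' hcd', mul_zero]
  · simp [compensatedIncrement_of_lt_fst hcd (hdc'.trans_lt hc'x)]

end CompensatedIncrement

theorem stmt10_general (lam mu T : ℝ) (hmu : 0 < mu) (hT : 0 < T)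
    (n : ℕ) (i j : ℕ) (hij : i < j) :
    ∫ x in Set.Ici (0:ℝ), ∫ z in Set.Ici (0:ℝ),
      uSharp T mu n i (x, z) * uSharp T mu n j (x, z)
        * (lam * n * mu * Real.exp (-mu * z)) = 0 := by
  have hgrid : Monotone fun k : ℝ => k * T / n := fun _ _ hab =>
    div_le_div_of_nonneg_right (mul_le_mul_of_nonneg_right hab hT.le) n.cast_nonneg
  have hi := hgrid (le_add_of_nonneg_right zero_le_one : (i : ℝ) ≤ i + 1)
  have hij' := hgrid (show (i : ℝ) + 1 ≤ j by exact_mod_cast hij)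
  have hj := hgrid (le_add_of_nonneg_right zero_le_one : (j : ℝ) ≤ j + 1)
  refine setIntegral_eq_zero_of_forall_eq_zero fun x hx => ?_
  simp_rw [uSharp_eq]
  calc _ = lam * n * mu * (1 / √T) ^ 2 * ∫ z in Ici 0,
          compensatedIncrement mu (i * T / n) ((i + 1) * T / n) (x, z)
            * compensatedIncrement mu (j * T / n) ((j + 1) * T / n) (x, z) * exp (-mu * z) := by
        rw [← integral_const_mul]
        congr 1 with z
        ring
    _ = 0 := by
      rw [integral_compensatedIncrement_mul_compensatedIncrement_mul_exp hmu hx hi hij' hj,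
        mul_zero]

/-- Orthogonality of the family `(u_i)` in `L²(ν_n)`, where
`dν_n(x,z) = λn dx ⊗ μ e^{-μz} dz` on `[0,∞)²`. -/
theorem stmt10 (lam mu T : ℝ) (hlam : 0 < lam) (hmu : 0 < mu) (hT : 0 < T)
    (n : ℕ) (hn : 0 < n) (i j : ℕ) (hij : i < j) (hj : j ≤ n - 1) :
    ∫ x in Set.Ici (0:ℝ), ∫ z in Set.Ici (0:ℝ),
      uSharp T mu n i (x, z) * uSharp T mu n j (x, z)
        * (lam * n * mu * Real.exp (-mu * z)) = 0 :=
  stmt10_general lam mu T hmu hT n i j hij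
end

section
/- Let λ, μ > 0 and u, v, w ≥ 0. Then ∫∫_{[0,∞)²} 1_{C_u}(x,z) 1_{C_v}(x,z) 1_{C_w}(x,z) λ μ e^{-μ z} dx dz = (λ/μ)( e^{-μ(M - m)} - e^{-μ M} ), where M = max(u,v,w) and m = min(u,v,w). -/
/-!
The three trapezoids intersect in `{0 ≤ x ≤ m, z ≥ M - x}`. For `x ∈ [0, m]` the `z`-integral of
`λ μ e^{-μ z}` over `[M - x, ∞)` is `λ e^{-μ (M - x)}`, and integrating this over `x ∈ [0, m]`
gives `(λ / μ) (e^{-μ (M - m)} - e^{-μ M})`.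
-/

open MeasureTheory Set Real

def trapezoid (a b : ℝ) : Set (ℝ × ℝ) := {p | 0 ≤ p.1 ∧ p.1 ≤ a ∧ b - p.1 ≤ p.2}

lemma Ctrap_eq_trapezoid (t : ℝ) : Ctrap t = trapezoid t t := rfl

lemma trapezoid_inter_trapezoid (a b a' b' : ℝ) :
    trapezoid a b ∩ trapezoid a' b' = trapezoid (min a a') (max b b') := by
  ext ⟨x, z⟩
  simp only [trapezoid, mem_inter_iff, mem_ofPred_eq, le_min_iff, sub_le_iff_le_add, max_le_iff]
  tauto

lemma indC_mul_indC_mul_indC (u v w : ℝ) (p : ℝ × ℝ) :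
    indC u p * indC v p * indC w p
      = (trapezoid (min u (min v w)) (max u (max v w))).indicator 1 p := by
  simp only [indC, Ctrap_eq_trapezoid]
  rw [← Pi.one_def, ← Pi.mul_apply, ← Pi.mul_apply, ← inter_indicator_one, ← inter_indicator_one,
    trapezoid_inter_trapezoid, trapezoid_inter_trapezoid, min_assoc, max_assoc]

lemma setIntegral_Ici_indicator_trapezoid_mul {a b : ℝ} (hab : a ≤ b) (f : ℝ → ℝ) (x : ℝ) :
    ∫ z in Ici 0, (trapezoid a b).indicator 1 (x, z) * f z
      = (Icc 0 a).indicator (fun x => ∫ z in Ici (b - x), f z) x := by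
  by_cases hx : x ∈ Icc 0 a
  · have slice :
        (fun z => (trapezoid a b).indicator 1 (x, z) * f z) = (Ici (b - x)).indicator f := by
      ext z
      simp [indicator_apply, trapezoid, hx.1, hx.2]
    rw [slice, integral_indicator measurableSet_Ici, Measure.restrict_restrict measurableSet_Ici,
      Ici_inter_Ici, max_eq_left (by linarith [hx.2]), indicator_of_mem hx]
  · have hzero : ∀ z, (trapezoid a b).indicator (1 : ℝ × ℝ → ℝ) (x, z) = 0 :=
      fun z => indicator_of_notMem (fun h => hx ⟨h.1, h.2.1⟩) _
    simp [hzero, indicator_of_notMem hx]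

lemma setIntegral_Ici_mul_exp_neg_mul {mu : ℝ} (hmu : 0 < mu) (c : ℝ) :
    ∫ z in Ici c, mu * exp (-mu * z) = exp (-mu * c) := by
  rw [integral_Ici_eq_integral_Ioi, integral_const_mul, integral_exp_mul_Ioi (by linarith) c]
  field_simp

lemma intervalIntegral_exp_neg_mul_sub {mu : ℝ} (hmu : mu ≠ 0) (a b : ℝ) :
    ∫ x in (0 : ℝ)..a, exp (-mu * (b - x)) = (exp (-mu * (b - a)) - exp (-mu * b)) / mu := by
  have affine : ∀ x, -mu * (b - x) = mu * x + -mu * b := fun x => by ring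
  simp_rw [affine, intervalIntegral.integral_comp_mul_add (fun x => exp x) hmu, integral_exp,
    smul_eq_mul, mul_zero, zero_add]
  field_simp

theorem integral_indicator_trapezoid_mul_exp {mu : ℝ} (hmu : 0 < mu) {a b : ℝ} (ha : 0 ≤ a)
    (hab : a ≤ b) (c : ℝ) :
    ∫ x in Ici (0 : ℝ), ∫ z in Ici (0 : ℝ),
      (trapezoid a b).indicator 1 (x, z) * (c * mu * exp (-mu * z))
      = c / mu * (exp (-mu * (b - a)) - exp (-mu * b)) := by
  have inner : ∀ x,
      ∫ z in Ici (0 : ℝ), (trapezoid a b).indicator 1 (x, z) * (c * mu * exp (-mu * z))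
        = (Icc 0 a).indicator (fun x => c * exp (-mu * (b - x))) x := by
    intro x
    rw [setIntegral_Ici_indicator_trapezoid_mul hab]
    simp_rw [mul_assoc c, integral_const_mul c, setIntegral_Ici_mul_exp_neg_mul hmu]
  simp_rw [inner]
  rw [integral_indicator measurableSet_Icc, Measure.restrict_restrict measurableSet_Icc,
    inter_eq_left.2 Icc_subset_Ici_self, integral_Icc_eq_integral_Ioc,
    ← intervalIntegral.integral_of_le ha, intervalIntegral.integral_const_mul,
    intervalIntegral_exp_neg_mul_sub hmu.ne']
  ring

theorem stmt13_general (lam mu : ℝ) (hmu : 0 < mu)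
    (u v w : ℝ) (hu : 0 ≤ u) (hv : 0 ≤ v) (hw : 0 ≤ w) :
    ∫ x in Set.Ici (0:ℝ), ∫ z in Set.Ici (0:ℝ),
      indC u (x, z) * indC v (x, z) * indC w (x, z) * (lam * mu * Real.exp (-mu * z))
      = (lam / mu) *
          (Real.exp (-mu * (max u (max v w) - min u (min v w)))
            - Real.exp (-mu * max u (max v w))) := by
  simp_rw [indC_mul_indC_mul_indC]
  exact integral_indicator_trapezoid_mul_exp hmu (le_min hu (le_min hv hw))
    ((min_le_left _ _).trans (le_max_left _ _)) lam

/-- `∫∫ 1_{C_u}1_{C_v}1_{C_w} λμ e^{-μz} dx dz = (λ/μ)(e^{-μ(M-m)} - e^{-μM})`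
with `M = max(u,v,w)`, `m = min(u,v,w)`. -/
theorem stmt13 (lam mu : ℝ) (hlam : 0 < lam) (hmu : 0 < mu)
    (u v w : ℝ) (hu : 0 ≤ u) (hv : 0 ≤ v) (hw : 0 ≤ w) :
    ∫ x in Set.Ici (0:ℝ), ∫ z in Set.Ici (0:ℝ),
      indC u (x, z) * indC v (x, z) * indC w (x, z) * (lam * mu * Real.exp (-mu * z))
      = (lam / mu) *
          (Real.exp (-mu * (max u (max v w) - min u (min v w)))
            - Real.exp (-mu * max u (max v w))) :=
  stmt13_general lam mu hmu u v w hu hv hw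
end
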